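/- Let d_n and A_n (n ≥ 0) be the classical derangement polynomials (counting fixed-point-free permutations of [n] by excedances) and Eulerian polynomials (counting all permutations of [n] by excedances). Then the pair of families ({A_n},{d_n}) is the unique pair of polynomial families satisfying: d_0 = A_0 = 1; A_n = Σ_{k=0}^n C(n,k) d_k for all n; t^n d_n(1/t) = d_n(t) for all n; and t^n A_n(1/t) = t·A_n(t) for all n ≥ 1. -/

import Mathlib

open Polynomial

/-- The Eulerian polynomial `Aₙ(t) = Σ_{σ ∈ Sₙ} t^{exc(σ)}`, where
`exc(σ) = #{i : σ(i) > i}`. -/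
noncomputable def eulerianPoly (n : ℕ) : Polynomial ℤ :=
  ∑ σ : Equiv.Perm (Fin n), X ^ (Finset.univ.filter fun i => i < σ i).card

/-- The derangement polynomial `dₙ(t) = Σ_{σ ∈ Dₙ} t^{exc(σ)}`, summing over
fixed-point-free permutations of `[n]`. -/
noncomputable def derangementPoly (n : ℕ) : Polynomial ℤ :=
  ∑ σ ∈ Finset.univ.filter (fun σ : Equiv.Perm (Fin n) => ∀ i, σ i ≠ i),
    X ^ (Finset.univ.filter fun i => i < σ i).card

/-- The defining properties: `d₀ = A₀ = 1`, `Aₙ = Σ_k C(n,k) d_k`,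
`tⁿ dₙ(1/t) = dₙ`, and `tⁿ Aₙ(1/t) = t·Aₙ` for `n ≥ 1`. -/
def EulerPairProps (A d : ℕ → Polynomial ℤ) : Prop :=
  d 0 = 1 ∧ A 0 = 1 ∧
  (∀ n, (d n).natDegree ≤ n) ∧
  (∀ n, A n = ∑ k ∈ Finset.range (n + 1), (n.choose k : Polynomial ℤ) * d k) ∧
  (∀ n, reflect n (d n) = d n) ∧
  (∀ n, 1 ≤ n → reflect n (A n) = X * A n)

/-!
Grouping permutations by their support, the permutations of `[n]` with support `s` are the
derangements of `s` (extended by the identity), and both the identification and the relabelling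
`s ≃o [#s]` preserve excedances; this gives `Aₙ = Σₖ C(n,k) dₖ`. Inversion turns the
anti-excedances of a derangement into excedances, so `dₙ` is palindromic of degree `n`. For
`Aₙ`, inversion turns anti-weak-excedances into weak excedances, and composing with the cycle
`i ↦ i + 1` turns weak excedances into excedances plus one, so `tⁿ Aₙ(1/t) = t Aₙ(t)`.

Conversely, writing `Sₙ = Σ_{k<n} C(n,k) dₖ`, the three relations combine to
`(t - 1) dₙ = tⁿ Sₙ(1/t) - t Sₙ`, which determines `dₙ` from `d₀, …, dₙ₋₁`.
-/

open Finset

namespace Equiv.Perm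

variable {α β : Type*}

theorem inv_mem_derangements_iff {σ : Perm α} : σ⁻¹ ∈ derangements α ↔ σ ∈ derangements α :=
  forall_congr' fun _ => not_congr (inv_eq_iff_eq.trans eq_comm)

variable [Fintype α] [Fintype β]

theorem card_filter_rel_apply (σ : Perm α) (r : α → α → Prop) [DecidableRel r] :
    #{i | r (σ i) i} = #{i | r i (σ⁻¹ i)} :=
  card_equiv σ fun i => by simp

variable [LinearOrder α] [LinearOrder β]

def exc (σ : Perm α) : ℕ := #{i | i < σ i}

theorem exc_add_card_apply_le (σ : Perm α) : σ.exc + #{i | σ i ≤ i} = Fintype.card α := by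
  simpa only [exc, not_lt, card_univ] using
    card_filter_add_card_filter_not (s := univ) fun i => i < σ i

theorem exc_add_exc_inv (σ : Perm α) (hσ : σ ∈ derangements α) :
    σ.exc + σ⁻¹.exc = Fintype.card α := by
  have hdrop : #{i | σ i ≤ i} = #{i | σ i < i} :=
    congrArg card <| filter_congr fun i _ => le_iff_lt_or_eq.trans (or_iff_left (hσ i))
  rw [← exc_add_card_apply_le σ, hdrop, card_filter_rel_apply σ (· < ·)]
  rfl

theorem exc_permCongr (e : α ≃o β) (σ : Perm α) : (e.toEquiv.permCongr σ).exc = σ.exc :=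
  card_equiv e.symm fun i => by rw [mem_filter, mem_filter]; simp [OrderIso.symm_apply_lt]

theorem exc_ofSubtype {p : α → Prop} [DecidablePred p] [Fintype (Subtype p)]
    (σ : Perm (Subtype p)) : (ofSubtype σ).exc = σ.exc := by
  symm
  refine card_bij (fun i _ => i.val) ?_ (fun _ _ _ _ => Subtype.ext) ?_
  · intro i hi
    simpa [ofSubtype_apply_of_mem σ i.2] using hi
  · intro a ha
    simp only [mem_filter, mem_univ, true_and] at ha
    have hpa : p a := by
      by_contra hpa
      rw [ofSubtype_apply_of_not_mem σ hpa] at ha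
      exact lt_irrefl a ha
    refine ⟨⟨a, hpa⟩, ?_, rfl⟩
    rw [ofSubtype_apply_of_mem σ hpa] at ha
    simpa [← Subtype.coe_lt_coe] using ha

theorem _root_.Fin.lt_add_one_iff_le_of_ne_last {m : ℕ} {i j : Fin (m + 1)}
    (hj : j ≠ Fin.last m) : i < j + 1 ↔ i ≤ j := by
  rw [Fin.lt_def, Fin.val_add_one_of_lt (Fin.lt_last_iff_ne_last.mpr hj), Fin.le_def]
  omega

theorem card_le_apply_eq_exc_finRotate_mul {m : ℕ} (σ : Perm (Fin (m + 1))) :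
    #{i | i ≤ σ i} = (finRotate (m + 1) * σ).exc + 1 := by
  have hsplit : univ.filter (fun i => i ≤ σ i) =
      insert (σ⁻¹ (Fin.last m)) (univ.filter fun i => i < finRotate _ (σ i)) := by
    ext i
    by_cases hi : σ i = Fin.last m
    · simp [hi, ← eq_inv_iff_eq.mpr hi, Fin.le_last]
    · simp [Fin.lt_add_one_iff_le_of_ne_last hi, Equiv.eq_symm_apply, hi]
  rw [hsplit, card_insert_of_notMem (by simp)]
  rfl

end Equiv.Perm

namespace Polynomial

theorem reflect_sum {R ι : Type*} [Semiring R] (N : ℕ) (s : Finset ι) (f : ι → R[X]) :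
    reflect N (∑ i ∈ s, f i) = ∑ i ∈ s, reflect N (f i) :=
  map_sum (⟨⟨reflect N, reflect_zero⟩, fun p q => reflect_add p q N⟩ : R[X] →+ R[X]) f s

end Polynomial

open Equiv Equiv.Perm

theorem eulerianPoly_eq_sum_X_pow_exc (n : ℕ) :
    eulerianPoly n = ∑ σ : Perm (Fin n), X ^ σ.exc := rfl

theorem derangementPoly_eq_sum_X_pow_exc (n : ℕ) :
    derangementPoly n = ∑ σ ∈ univ.filter (· ∈ derangements (Fin n)), X ^ σ.exc := by
  unfold derangementPoly
  congr 1
  ext σ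
  simp only [mem_filter_univ]
  rfl

variable {α : Type*} [LinearOrder α] [Fintype α]

theorem sum_derangements_X_pow_exc :
    ∑ σ ∈ univ.filter (· ∈ derangements α), (X : ℤ[X]) ^ σ.exc =
      derangementPoly (Fintype.card α) := by
  let e := (Fintype.orderIsoFinOfCardEq α rfl).symm
  refine sum_equiv e.toEquiv.permCongr (fun σ => ?_) fun σ _ => by rw [← exc_permCongr e σ]; rfl
  simp [derangements, e.symm.surjective.forall, ← e.eq_symm_apply]

theorem sum_support_eq_X_pow_exc (s : Finset α) :
    ∑ σ ∈ univ.filter (fun σ : Perm α => σ.support = s), (X : ℤ[X]) ^ σ.exc =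
      derangementPoly #s := by
  classical
  have hfiber : ∀ σ : Perm α, σ ∈ univ.filter (fun σ : Perm α => σ.support = s) ↔
      ∀ a, a ∉ s ↔ a ∈ Function.fixedPoints σ := by
    intro σ
    simp [Finset.ext_iff, Function.mem_fixedPoints, Function.IsFixedPt, not_iff_comm]
  rw [sum_subtype _ hfiber, ← Fintype.card_coe s, ← sum_derangements_X_pow_exc,
    sum_subtype _ (fun _ => mem_filter_univ _)]
  symm
  exact Fintype.sum_equiv (derangements.subtypeEquiv (· ∈ s)) _ _
    fun τ => congrArg (X ^ ·) (exc_ofSubtype (p := (· ∈ s)) τ.1).symm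

theorem sum_X_pow_exc_eq_sum_choose_mul_derangementPoly :
    ∑ σ : Perm α, (X : ℤ[X]) ^ σ.exc = ∑ k ∈ range (Fintype.card α + 1),
      ((Fintype.card α).choose k : ℤ[X]) * derangementPoly k := by
  rw [← sum_fiberwise_of_maps_to (s := univ) (g := Perm.support) (t := univ.powerset) (by simp)]
  simp_rw [sum_support_eq_X_pow_exc]
  rw [sum_powerset_apply_card (fun k => derangementPoly k), card_univ]
  simp_rw [nsmul_eq_mul]

theorem eulerianPoly_eq_sum_choose_mul_derangementPoly (n : ℕ) :
    eulerianPoly n = ∑ k ∈ range (n + 1), (n.choose k : ℤ[X]) * derangementPoly k := by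
  rw [eulerianPoly_eq_sum_X_pow_exc, sum_X_pow_exc_eq_sum_choose_mul_derangementPoly,
    Fintype.card_fin]

theorem derangementPoly_zero : derangementPoly 0 = 1 := by
  simp [derangementPoly]

theorem eulerianPoly_zero : eulerianPoly 0 = 1 := by
  simp [eulerianPoly]

theorem natDegree_derangementPoly_le (n : ℕ) : (derangementPoly n).natDegree ≤ n :=
  natDegree_sum_le_of_forall_le _ _ fun σ _ => by
    simpa [natDegree_X_pow] using card_filter_le univ fun i => i < σ i

theorem reflect_X_pow_exc {R : Type*} [Semiring R] (σ : Perm α) :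
    reflect (Fintype.card α) ((X : R[X]) ^ σ.exc) = X ^ #{i | σ i ≤ i} := by
  have hsum := exc_add_card_apply_le σ
  rw [reflect_monomial, revAt_le (by omega)]
  congr 1
  omega

theorem reflect_X_pow_exc_of_mem_derangements {R : Type*} [Semiring R] {σ : Perm α}
    (hσ : σ ∈ derangements α) :
    reflect (Fintype.card α) ((X : R[X]) ^ σ.exc) = X ^ σ⁻¹.exc := by
  have hsum := exc_add_exc_inv σ hσ
  rw [reflect_monomial, revAt_le (by omega)]
  congr 1
  omega

theorem reflect_sum_derangements_X_pow_exc :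
    reflect (Fintype.card α) (∑ σ ∈ univ.filter (· ∈ derangements α), (X : ℤ[X]) ^ σ.exc) =
      ∑ σ ∈ univ.filter (· ∈ derangements α), (X : ℤ[X]) ^ σ.exc := by
  rw [reflect_sum]
  refine sum_equiv (Equiv.inv _) (fun σ => ?_) (fun σ hσ => ?_)
  · simp only [mem_filter_univ, Equiv.inv_apply, inv_mem_derangements_iff]
  · exact reflect_X_pow_exc_of_mem_derangements (mem_filter_univ _ |>.mp hσ)

theorem reflect_derangementPoly (n : ℕ) : reflect n (derangementPoly n) = derangementPoly n := by
  simpa only [derangementPoly_eq_sum_X_pow_exc, Fintype.card_fin] using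
    reflect_sum_derangements_X_pow_exc (α := Fin n)

theorem reflect_eulerianPoly_succ (m : ℕ) :
    reflect (m + 1) (eulerianPoly (m + 1)) = X * eulerianPoly (m + 1) := by
  calc reflect (m + 1) (eulerianPoly (m + 1))
      = ∑ σ : Perm (Fin (m + 1)), (X : ℤ[X]) ^ #{i | i ≤ σ⁻¹ i} := by
        rw [eulerianPoly_eq_sum_X_pow_exc, reflect_sum]
        refine sum_congr rfl fun σ _ => ?_
        rw [← card_filter_rel_apply σ (· ≤ ·), ← reflect_X_pow_exc σ, Fintype.card_fin]
    _ = ∑ σ : Perm (Fin (m + 1)), (X : ℤ[X]) ^ #{i | i ≤ σ i} :=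
        Fintype.sum_equiv (Equiv.inv _) _ _ fun σ => rfl
    _ = ∑ σ : Perm (Fin (m + 1)), (X : ℤ[X]) ^ (σ.exc + 1) :=
        Fintype.sum_equiv (Equiv.mulLeft (finRotate _)) _ _ fun σ =>
          congrArg (X ^ ·) (card_le_apply_eq_exc_finRotate_mul σ)
    _ = X * eulerianPoly (m + 1) := by
        simp only [eulerianPoly_eq_sum_X_pow_exc, mul_sum, pow_succ']

namespace EulerPairProps

variable {A d : ℕ → ℤ[X]}

theorem X_sub_one_mul (h : EulerPairProps A d) {n : ℕ} (hn : 1 ≤ n) :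
    (X - 1) * d n = reflect n (∑ k ∈ range n, (n.choose k : ℤ[X]) * d k)
      - X * ∑ k ∈ range n, (n.choose k : ℤ[X]) * d k := by
  obtain ⟨-, -, -, hA, hd, hAsym⟩ := h
  have hrefl := hAsym n hn
  rw [hA n, sum_range_succ, Nat.choose_self, Nat.cast_one, one_mul, reflect_add, hd n] at hrefl
  linear_combination -hrefl

theorem derangement_eq {A' d' : ℕ → ℤ[X]} (h : EulerPairProps A d) (h' : EulerPairProps A' d') :
    d = d' := by
  funext n
  induction n using Nat.strong_induction_on with
  | _ n ih =>
    rcases Nat.eq_zero_or_pos n with rfl | hn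
    · rw [h.1, h'.1]
    have hsum : ∑ k ∈ range n, (n.choose k : ℤ[X]) * d k =
        ∑ k ∈ range n, (n.choose k : ℤ[X]) * d' k :=
      sum_congr rfl fun k hk => by rw [ih k (mem_range.mp hk)]
    refine mul_left_cancel₀ (by simpa using X_sub_C_ne_zero (1 : ℤ)) ?_
    rw [h.X_sub_one_mul hn, h'.X_sub_one_mul hn, hsum]

theorem eulerian_eq {A' d' : ℕ → ℤ[X]} (h : EulerPairProps A d) (h' : EulerPairProps A' d') :
    A = A' := by
  funext n
  rw [h.2.2.2.1, h'.2.2.2.1, h.derangement_eq h']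

end EulerPairProps

theorem eulerPairProps_eulerianPoly_derangementPoly :
    EulerPairProps eulerianPoly derangementPoly :=
  ⟨derangementPoly_zero, eulerianPoly_zero, natDegree_derangementPoly_le,
    eulerianPoly_eq_sum_choose_mul_derangementPoly, reflect_derangementPoly,
    fun _ hn => by
      obtain ⟨m, rfl⟩ := Nat.exists_eq_add_of_le' hn
      exact reflect_eulerianPoly_succ m⟩

/-- The Eulerian and derangement polynomials form the unique pair of families
satisfying the defining properties. -/
theorem stmt18 :
    EulerPairProps eulerianPoly derangementPoly ∧
    ∀ A d : ℕ → Polynomial ℤ, EulerPairProps A d →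
      ∀ n, A n = eulerianPoly n ∧ d n = derangementPoly n :=
  ⟨eulerPairProps_eulerianPoly_derangementPoly, fun _ _ h n =>
    ⟨congrFun (h.eulerian_eq eulerPairProps_eulerianPoly_derangementPoly) n,
      congrFun (h.derangement_eq eulerPairProps_eulerianPoly_derangementPoly) n⟩⟩
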